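/- Let A be a p×L complex matrix and Q a p×p positive semidefinite Hermitian matrix. If Z and Z̃ are L×L positive semidefinite Hermitian matrices each satisfying Q = A·Z·Aᴴ = A·Z̃·Aᴴ, and each has at most σ(A)/2 nonzero rows (where σ(A) is the Kruskal rank of A), then Z = Z̃. -/

import Mathlib

/-! The difference `D = Z - Zt` has its nonzero rows in `S = I(Z) ∪ I(Zt)`, and `|S| ≤ σ(A)`,
so the columns of `A` indexed by `S` are linearly independent: `A` annihilates no nonzero vector
supported on `S`. From `A (D Aᴴ) = 0` this gives `D Aᴴ = 0`; taking adjoints (`D` is Hermitian)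
gives `A D = 0`, and the same argument gives `D = 0`. -/

open Matrix Set
open scoped ComplexOrder

/-- The Kruskal rank of a matrix `A`: the maximal number `q` such that every
set of `q` columns of `A` is linearly independent. -/
noncomputable def kruskalRank {p L : ℕ} (A : Matrix (Fin p) (Fin L) ℂ) : ℕ :=
  sSup {q | q ≤ L ∧ ∀ S : Finset (Fin L), S.card = q →
    LinearIndependent ℂ (fun j : S => A.transpose (j : Fin L))}

namespace Matrix

variable {R l m n : Type*} [CommRing R] [Fintype n]

theorem eq_zero_of_mulVec_eq_zero_of_linearIndepOn {A : Matrix m n R} {S : Finset n}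
    (hA : LinearIndepOn R Aᵀ (S : Set n)) {w : n → R} (hw : ∀ k ∉ S, w k = 0)
    (h : A *ᵥ w = 0) : w = 0 := by
  have hsum : ∑ j : S, w j • Aᵀ j = 0 := by
    rw [Finset.sum_coe_sort S (fun j => w j • Aᵀ j),
      Finset.sum_subset (Finset.subset_univ S) fun k _ hk => by simp [hw k hk], ← h]
    ext i
    simp [mulVec, dotProduct, mul_comm]
  funext k
  by_cases hk : k ∈ S
  · exact Fintype.linearIndependent_iff.mp hA (fun j : S => w j) hsum ⟨k, hk⟩
  · exact hw k hk

theorem eq_zero_of_mul_eq_zero_of_linearIndepOn {A : Matrix m n R} {S : Finset n}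
    (hA : LinearIndepOn R Aᵀ (S : Set n)) {M : Matrix n l R} (hM : ∀ k ∉ S, M k = 0)
    (h : A * M = 0) : M = 0 := by
  ext k j
  have hcol := eq_zero_of_mulVec_eq_zero_of_linearIndepOn hA (w := fun k => M k j)
    (fun k hk => by simp [hM k hk])
    (by ext i; simpa [mul_apply, mulVec, dotProduct] using congrFun₂ h i j)
  exact congrFun hcol k

end Matrix

theorem kruskalRank_mem {p L : ℕ} (A : Matrix (Fin p) (Fin L) ℂ) :
    kruskalRank A ∈ {q | q ≤ L ∧ ∀ S : Finset (Fin L), S.card = q →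
      LinearIndependent ℂ (fun j : S => A.transpose (j : Fin L))} := by
  refine Nat.sSup_mem ⟨0, Nat.zero_le _, fun S hS => ?_⟩ ⟨L, fun q hq => hq.1⟩
  rw [Finset.card_eq_zero.mp hS]
  exact linearIndependent_empty_type

theorem linearIndepOn_of_card_le_kruskalRank {p L : ℕ} (A : Matrix (Fin p) (Fin L) ℂ)
    {S : Finset (Fin L)} (hS : S.card ≤ kruskalRank A) :
    LinearIndepOn ℂ Aᵀ (S : Set (Fin L)) := by
  obtain ⟨hL, hA⟩ := kruskalRank_mem A
  obtain ⟨T, hST, hT⟩ := Finset.exists_superset_card_eq hS (by simpa using hL)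
  exact LinearIndepOn.mono (hA T hT) (Finset.coe_subset.mpr hST)

theorem stmt4_general {p L : ℕ} (A : Matrix (Fin p) (Fin L) ℂ)
    (Q : Matrix (Fin p) (Fin p) ℂ) (Z Zt : Matrix (Fin L) (Fin L) ℂ)
    (hZ : Z.PosSemidef) (hZt : Zt.PosSemidef)
    (hEqZ : Q = A * Z * Aᴴ) (hEqZt : Q = A * Zt * Aᴴ)
    (hZs : 2 * {k | Z k ≠ 0}.ncard ≤ kruskalRank A)
    (hZts : 2 * {k | Zt k ≠ 0}.ncard ≤ kruskalRank A) :
    Z = Zt := by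
  classical
  set S := ({k | Z k ≠ 0} ∪ {k | Zt k ≠ 0}).toFinset
  have hS : S.card ≤ kruskalRank A := by
    rw [← Set.ncard_coe_finset, Set.coe_toFinset]
    have := Set.ncard_union_le {k | Z k ≠ 0} {k | Zt k ≠ 0}
    omega
  have hAS := linearIndepOn_of_card_le_kruskalRank A hS
  have hrow : ∀ k ∉ S, (Z - Zt) k = 0 := fun k hk => by
    simp only [S, Set.mem_toFinset, Set.mem_union, Set.mem_ofPred_eq, not_or, not_not] at hk
    ext j
    simp [hk.1, hk.2]
  have hDA : (Z - Zt) * Aᴴ = 0 :=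
    eq_zero_of_mul_eq_zero_of_linearIndepOn hAS
      (fun k hk => by rw [mul_apply_eq_vecMul, hrow k hk, zero_vecMul])
      (by rw [← Matrix.mul_assoc, Matrix.mul_sub, Matrix.sub_mul, ← hEqZ, ← hEqZt, sub_self])
  have hAD : A * (Z - Zt) = 0 := by
    have := congrArg conjTranspose hDA
    rwa [conjTranspose_mul, conjTranspose_conjTranspose, conjTranspose_sub, hZ.isHermitian.eq,
      hZt.isHermitian.eq, conjTranspose_zero] at this
  exact sub_eq_zero.mp (eq_zero_of_mul_eq_zero_of_linearIndepOn hAS hrow hAD)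

theorem stmt4 {p L : ℕ} (A : Matrix (Fin p) (Fin L) ℂ)
    (Q : Matrix (Fin p) (Fin p) ℂ) (Z Zt : Matrix (Fin L) (Fin L) ℂ)
    (hQ : Q.PosSemidef) (hZ : Z.PosSemidef) (hZt : Zt.PosSemidef)
    (hEqZ : Q = A * Z * Aᴴ) (hEqZt : Q = A * Zt * Aᴴ)
    (hZs : 2 * {k | Z k ≠ 0}.ncard ≤ kruskalRank A)
    (hZts : 2 * {k | Zt k ≠ 0}.ncard ≤ kruskalRank A) :
    Z = Zt :=
  stmt4_general A Q Z Zt hZ hZt hEqZ hEqZt hZs hZts
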